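/- Let μ ⊆ λ be partitions. Then rk(λ/μ) = (1/2) · Σ_{k∈ℤ} (a_k − a_{k+1})², where a_k is the number of cells of λ/μ of content k (the sum has only finitely many nonzero terms, and rk(λ/λ) = 0). -/

import Mathlib

/-- The content of a cell `(i,j)` is `j − i`. -/
def content (c : ℕ × ℕ) : ℤ := (c.2 : ℤ) - (c.1 : ℤ)

/-- `aCount lam mu k` is the number of cells of the skew diagram `lam / mu` of content `k`. -/
def aCount (lam mu : YoungDiagram) (k : ℤ) : ℕ :=
  ((lam.cells \ mu.cells).filter (fun c => content c = k)).card

/-- Two cells are adjacent if they share an edge. -/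
def Adj (c d : ℕ × ℕ) : Prop :=
  (c.1 = d.1 ∧ (c.2 + 1 = d.2 ∨ d.2 + 1 = c.2)) ∨
  (c.2 = d.2 ∧ (c.1 + 1 = d.1 ∨ d.1 + 1 = c.1))

/-- A rim hook: a nonempty, edge-connected set of cells with pairwise distinct contents. -/
def IsRimHook (Sk : Finset (ℕ × ℕ)) : Prop :=
  Sk.Nonempty ∧
  (∀ c ∈ Sk, ∀ d ∈ Sk,
    Relation.ReflTransGen (fun a b => a ∈ Sk ∧ b ∈ Sk ∧ Adj a b) c d) ∧
  (∀ c ∈ Sk, ∀ d ∈ Sk, content c = content d → c = d)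

/-- The rank `rk(λ/μ)`: the minimal `r` for which there is a chain of partitions
`μ = ν_0 ⊆ ν_1 ⊆ ⋯ ⊆ ν_r = λ` with each `ν_{k+1}/ν_k` a rim hook (equal to `0` when
`μ = λ`, via the empty chain). -/
noncomputable def rimHookRank (mu lam : YoungDiagram) : ℕ :=
  sInf {r : ℕ | ∃ ν : ℕ → YoungDiagram, ν 0 = mu ∧ ν r = lam ∧
    ∀ k < r, ν k ≤ ν (k + 1) ∧ IsRimHook ((ν (k + 1)).cells \ (ν k).cells)}

namespace RH
open YoungDiagram



def beta (ν : YoungDiagram) (i : ℕ) : ℤ := (ν.rowLen i : ℤ) - i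

lemma beta_strict (ν : YoungDiagram) {i1 i2 : ℕ} (h : i1 < i2) :
    beta ν i2 < beta ν i1 := by
  have h1 : (ν.rowLen i2 : ℤ) ≤ ν.rowLen i1 := by
    exact_mod_cast ν.rowLen_anti i1 i2 h.le
  have h2 : (i1 : ℤ) < i2 := by exact_mod_cast h
  unfold beta; omega

lemma beta_anti (ν : YoungDiagram) {i1 i2 : ℕ} (h : i1 ≤ i2) :
    beta ν i2 ≤ beta ν i1 := by
  rcases h.lt_or_eq with h | rfl
  · exact (beta_strict ν h).le
  · exact le_rfl

lemma neg_le_beta (ν : YoungDiagram) (i : ℕ) : -(i : ℤ) ≤ beta ν i := by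
  have : (0:ℤ) ≤ ν.rowLen i := by positivity
  unfold beta; omega

lemma exists_beta_lt (ν : YoungDiagram) (K : ℤ) : ∃ i, beta ν i < K := by
  refine ⟨(ν.rowLen 0 + 1 - K).toNat, ?_⟩
  have h1 : (ν.rowLen ((ν.rowLen 0 + 1 - K).toNat) : ℤ) ≤ ν.rowLen 0 := by
    exact_mod_cast ν.rowLen_anti 0 _ (Nat.zero_le _)
  have h2 : ((ν.rowLen 0 + 1 - K).toNat : ℤ) ≥ (ν.rowLen 0 : ℤ) + 1 - K :=
    Int.self_le_toNat _
  unfold beta; omega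

def cnt (ν : YoungDiagram) (K : ℤ) : ℕ := Nat.find (exists_beta_lt ν K)

lemma lt_cnt_iff {ν : YoungDiagram} {K : ℤ} {i : ℕ} :
    i < cnt ν K ↔ K ≤ beta ν i := by
  rw [cnt, Nat.lt_find_iff]
  constructor
  · intro h; have := h i le_rfl; omega
  · intro h j hj
    have := beta_anti ν hj
    omega

lemma beta_cnt_lt (ν : YoungDiagram) (K : ℤ) : beta ν (cnt ν K) < K := by
  by_contra h
  push_neg at h
  exact lt_irrefl _ (lt_cnt_iff.mpr h)

/-- If two "initial segment" characterizations agree, counts agree. -/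
lemma cnt_eq_of_iff {ν : YoungDiagram} {K : ℤ} {n : ℕ}
    (h : ∀ i, i < cnt ν K ↔ i < n) : cnt ν K = n := by
  by_contra hne
  rcases Nat.lt_or_ge (cnt ν K) n with hlt | hge
  · exact absurd ((h _).mpr hlt) (lt_irrefl _)
  · exact absurd ((h n).mp (by omega)) (lt_irrefl n)

lemma cnt_anti (ν : YoungDiagram) {K K' : ℤ} (h : K ≤ K') : cnt ν K' ≤ cnt ν K := by
  by_contra hc
  have h1 : K' ≤ beta ν (cnt ν K) := lt_cnt_iff.mp (by omega)
  have := beta_cnt_lt ν K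
  omega

lemma cnt_step_le (ν : YoungDiagram) (K : ℤ) : cnt ν K ≤ cnt ν (K + 1) + 1 := by
  by_contra hc
  have h1 : K ≤ beta ν (cnt ν (K+1) + 1) := lt_cnt_iff.mp (by omega)
  have h2 := beta_strict ν (show cnt ν (K+1) < cnt ν (K+1) + 1 by omega)
  have h3 := beta_cnt_lt ν (K+1)
  omega

lemma cnt_pos_of (ν : YoungDiagram) {K : ℤ} (h : K ≤ 0) : (-K).toNat < cnt ν K := by
  rw [lt_cnt_iff]
  have h1 : ((-K).toNat : ℤ) = -K := Int.toNat_of_nonneg (by omega)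
  have := neg_le_beta ν (-K).toNat
  omega

lemma mem_iff_lt_cnt {ν : YoungDiagram} {i j : ℕ} :
    (i, j) ∈ ν ↔ i < cnt ν ((j : ℤ) - i + 1) := by
  rw [mem_iff_lt_rowLen, lt_cnt_iff]
  unfold beta
  constructor
  · intro hj
    have : (j:ℤ) < ν.rowLen i := by exact_mod_cast hj
    omega
  · intro hb
    have : (j:ℤ) < ν.rowLen i := by omega
    exact_mod_cast this

lemma rowLen_mono {μ ν : YoungDiagram} (h : μ ≤ ν) (i : ℕ) :
    μ.rowLen i ≤ ν.rowLen i := by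
  by_contra hc
  have hm : (i, ν.rowLen i) ∈ μ := mem_iff_lt_rowLen.mpr (by omega)
  have : (i, ν.rowLen i) ∈ ν := cells_subset_iff.mpr h hm
  rw [mem_iff_lt_rowLen] at this
  omega

lemma cnt_mono {μ ν : YoungDiagram} (h : μ ≤ ν) (K : ℤ) : cnt μ K ≤ cnt ν K := by
  by_contra hc
  have h1 : K ≤ beta μ (cnt ν K) := lt_cnt_iff.mp (by omega)
  have h2 : beta μ (cnt ν K) ≤ beta ν (cnt ν K) := by
    have := rowLen_mono h (cnt ν K); unfold beta; omega
  have := beta_cnt_lt ν K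
  omega



lemma neg_lt_cnt_succ (ν : YoungDiagram) (k : ℤ) : -(k:ℤ) ≤ (cnt ν (k+1) : ℤ) := by
  rcases le_or_gt (k+1) 0 with h | h
  · have := cnt_pos_of ν h
    have h1 : ((-(k+1)).toNat : ℤ) = -(k+1) := Int.toNat_of_nonneg (by omega)
    omega
  · have : (0:ℤ) ≤ (cnt ν (k+1) : ℤ) := by positivity
    omega

lemma skew_filter_eq {ν ν' : YoungDiagram} (k : ℤ) :
    ((ν'.cells \ ν.cells).filter (fun c => content c = k)) =
      (Finset.Ico (cnt ν (k+1)) (cnt ν' (k+1))).image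
        (fun (i : ℕ) => (i, ((i:ℤ) + k).toNat)) := by
  ext ⟨i, j⟩
  simp only [Finset.mem_filter, Finset.mem_sdiff, Finset.mem_image, Finset.mem_Ico,
    YoungDiagram.mem_cells]
  constructor
  · rintro ⟨⟨h1, h2⟩, h3⟩
    have hk : (j:ℤ) - i = k := h3
    refine ⟨i, ⟨?_, ?_⟩, ?_⟩
    · rw [mem_iff_lt_cnt] at h2
      have hkk : (j:ℤ) - i + 1 = k + 1 := by omega
      rw [hkk] at h2; omega
    · rw [mem_iff_lt_cnt] at h1
      have hkk : (j:ℤ) - i + 1 = k + 1 := by omega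
      rwa [hkk] at h1
    · have : ((i:ℤ) + k).toNat = j := by omega
      simp [this]
  · rintro ⟨i', ⟨h1, h2⟩, h3⟩
    have hi : i' = i := by
      have := congrArg Prod.fst h3; simpa using this
    rw [hi] at h1 h2 h3
    have hnn : 0 ≤ (i:ℤ) + k := by
      have := neg_lt_cnt_succ ν k
      omega
    have hj : (j:ℤ) = (i:ℤ) + k := by
      have := congrArg Prod.snd h3
      simp only at this
      rw [← this]
      omega
    have hkk : (j:ℤ) - i + 1 = k + 1 := by omega
    refine ⟨⟨?_, ?_⟩, ?_⟩
    · rw [mem_iff_lt_cnt, hkk]; exact h2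
    · rw [mem_iff_lt_cnt, hkk]; omega
    · show (j:ℤ) - i = k; omega

lemma skew_count {ν ν' : YoungDiagram} (k : ℤ) :
    ((ν'.cells \ ν.cells).filter (fun c => content c = k)).card =
      cnt ν' (k+1) - cnt ν (k+1) := by
  rw [skew_filter_eq k, Finset.card_image_of_injective _ (fun a b hab => by
    simpa using congrArg Prod.fst hab), Nat.card_Ico]

/-- `eZ ν j ∈ {0,1}` tells whether `j` is in the "beta-set" of `ν`. -/
def eZ (ν : YoungDiagram) (j : ℤ) : ℤ := (cnt ν j : ℤ) - cnt ν (j + 1)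

lemma eZ_nonneg (ν : YoungDiagram) (j : ℤ) : 0 ≤ eZ ν j := by
  have := cnt_anti ν (show j ≤ j + 1 by omega); unfold eZ; omega

lemma eZ_le_one (ν : YoungDiagram) (j : ℤ) : eZ ν j ≤ 1 := by
  have := cnt_step_le ν j; unfold eZ; omega

def Dset (ν ν' : YoungDiagram) : Set ℤ := {j | eZ ν j ≠ eZ ν' j}

lemma cnt_eq_zero (ν : YoungDiagram) {K : ℤ} (h : (ν.rowLen 0 : ℤ) < K) :
    cnt ν K = 0 := by
  by_contra hc
  have h1 : K ≤ beta ν 0 := lt_cnt_iff.mp (by omega)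
  unfold beta at h1; simp at h1; omega

lemma rowLen_eq_zero_of {ν : YoungDiagram} {i : ℕ} (h : ν.colLen 0 ≤ i) :
    ν.rowLen i = 0 := by
  by_contra hc
  have : (i, 0) ∈ ν := mem_iff_lt_rowLen.mpr (by omega)
  rw [mem_iff_lt_colLen] at this
  omega

lemma cnt_low (ν : YoungDiagram) {K : ℤ} (h : K ≤ -(ν.colLen 0 : ℤ)) :
    (cnt ν K : ℤ) = 1 - K := by
  have hK0 : K ≤ 0 := by
    have : (0:ℤ) ≤ (ν.colLen 0 : ℤ) := by positivity
    omega
  have h1 : ((-K).toNat : ℤ) = -K := Int.toNat_of_nonneg (by omega)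
  have hlow := cnt_pos_of ν hK0
  have hup : cnt ν K ≤ (-K).toNat + 1 := by
    by_contra hc
    have h2 : K ≤ beta ν ((-K).toNat + 1) := lt_cnt_iff.mp (by omega)
    have h3 : ν.rowLen ((-K).toNat + 1) = 0 := by
      apply rowLen_eq_zero_of
      have : (ν.colLen 0 : ℤ) ≤ -K := by omega
      omega
    unfold beta at h2
    rw [h3] at h2
    push_cast at h2
    omega
  omega

lemma eZ_high (ν : YoungDiagram) {j : ℤ} (h : (ν.rowLen 0 : ℤ) < j) : eZ ν j = 0 := by
  unfold eZ
  rw [cnt_eq_zero ν h, cnt_eq_zero ν (by omega)]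
  simp

lemma eZ_low (ν : YoungDiagram) {j : ℤ} (h : j + 1 ≤ -(ν.colLen 0 : ℤ)) : eZ ν j = 1 := by
  unfold eZ
  rw [cnt_low ν (by omega), cnt_low ν h]
  ring

lemma Dset_subset (ν ν' : YoungDiagram) :
    Dset ν ν' ⊆ Set.Icc (-(max (ν.colLen 0) (ν'.colLen 0) : ℤ) - 1)
      (max (ν.rowLen 0) (ν'.rowLen 0)) := by
  intro j hj
  simp only [Set.mem_Icc]
  by_contra hc
  push_neg at hc
  apply hj
  rcases le_or_gt j (-(max (ν.colLen 0) (ν'.colLen 0) : ℤ) - 2) with h | h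
  · rw [eZ_low ν, eZ_low ν']
    · have : (ν'.colLen 0 : ℤ) ≤ max (ν.colLen 0) (ν'.colLen 0) := by
        exact_mod_cast Nat.cast_le.mpr (le_max_right _ _)
      omega
    · have : (ν.colLen 0 : ℤ) ≤ max (ν.colLen 0) (ν'.colLen 0) := by
        exact_mod_cast Nat.cast_le.mpr (le_max_left _ _)
      omega
  · have hbig : (max (ν.rowLen 0) (ν'.rowLen 0) : ℤ) < j := hc (by omega)
    rw [eZ_high ν, eZ_high ν']
    · have : (ν'.rowLen 0 : ℤ) ≤ max (ν.rowLen 0) (ν'.rowLen 0) := by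
        exact_mod_cast Nat.cast_le.mpr (le_max_right _ _)
      omega
    · have : (ν.rowLen 0 : ℤ) ≤ max (ν.rowLen 0) (ν'.rowLen 0) := by
        exact_mod_cast Nat.cast_le.mpr (le_max_left _ _)
      omega

lemma Dset_finite (ν ν' : YoungDiagram) : (Dset ν ν').Finite :=
  (Set.finite_Icc _ _).subset (Dset_subset ν ν')



lemma aCount_cast {mu lam : YoungDiagram} (h : mu ≤ lam) (k : ℤ) :
    (aCount lam mu k : ℤ) = (cnt lam (k+1) : ℤ) - cnt mu (k+1) := by
  unfold aCount
  rw [skew_count k]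
  have := cnt_mono h (k+1)
  omega

lemma sq_term_eq {mu lam : YoungDiagram} (h : mu ≤ lam) (k : ℤ) :
    ((aCount lam mu k : ℤ) - (aCount lam mu (k + 1) : ℤ)) ^ 2 =
      (eZ lam (k+1) - eZ mu (k+1)) ^ 2 := by
  rw [aCount_cast h, aCount_cast h]
  unfold eZ
  ring_nf

lemma sq_eZ_of_mem {mu lam : YoungDiagram} {j : ℤ} (hd : j ∈ Dset mu lam) :
    (eZ lam j - eZ mu j) ^ 2 = 1 := by
  have h1 := eZ_nonneg mu j
  have h2 := eZ_le_one mu j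
  have h3 := eZ_nonneg lam j
  have h4 := eZ_le_one lam j
  have hne : eZ mu j ≠ eZ lam j := hd
  have : eZ lam j - eZ mu j = 1 ∨ eZ lam j - eZ mu j = -1 := by omega
  rcases this with h | h <;> rw [sq, h] <;> ring

lemma sq_eZ_of_not_mem {mu lam : YoungDiagram} {j : ℤ} (hd : j ∉ Dset mu lam) :
    (eZ lam j - eZ mu j) ^ 2 = 0 := by
  have heq : eZ mu j = eZ lam j := by
    by_contra hc; exact hd hc
  rw [heq]; ring

lemma rhs_eq {mu lam : YoungDiagram} (h : mu ≤ lam) :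
    ∑ᶠ k : ℤ, ((aCount lam mu k : ℤ) - (aCount lam mu (k + 1) : ℤ)) ^ 2 =
      ((Dset mu lam).ncard : ℤ) := by
  set F : ℤ → ℤ := fun j => (eZ lam j - eZ mu j) ^ 2 with hF
  have hsupp : Function.support F = Dset mu lam := by
    ext j
    simp only [Function.mem_support, hF]
    constructor
    · intro hne
      by_contra hd
      exact hne (sq_eZ_of_not_mem hd)
    · intro hd
      rw [sq_eZ_of_mem hd]
      norm_num
  have hfin : (Function.support F).Finite := by
    rw [hsupp]; exact Dset_finite mu lam
  have hshift : ∑ᶠ k : ℤ, ((aCount lam mu k : ℤ) - (aCount lam mu (k + 1) : ℤ)) ^ 2 =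
      ∑ᶠ j : ℤ, F j := by
    rw [← finsum_comp_equiv (Equiv.addRight (1:ℤ)) (f := F)]
    apply finsum_congr
    intro k
    rw [sq_term_eq h k]
    rfl
  rw [hshift, finsum_eq_sum F hfin]
  have hone : ∀ j ∈ hfin.toFinset, F j = 1 := by
    intro j hj
    rw [Set.Finite.mem_toFinset, hsupp] at hj
    exact sq_eZ_of_mem hj
  rw [Finset.sum_congr rfl hone, Finset.sum_const, nsmul_eq_mul, mul_one]
  congr 1
  rw [Set.ncard_eq_toFinset_card _ (Dset_finite mu lam)]
  congr 1
  ext j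
  rw [Set.Finite.mem_toFinset, Set.Finite.mem_toFinset, hsupp]



lemma adj_content {a b : ℕ × ℕ} (h : Adj a b) :
    content b = content a + 1 ∨ content b = content a - 1 := by
  obtain ⟨a1, a2⟩ := a
  obtain ⟨b1, b2⟩ := b
  unfold Adj at h
  unfold content
  simp only at h ⊢
  rcases h with ⟨h1, h2 | h2⟩ | ⟨h1, h2 | h2⟩ <;>
    [left; right; right; left] <;> subst h1 <;> push_cast [← h2] <;> ring

lemma path_content {Sk : Finset (ℕ × ℕ)} {c d : ℕ × ℕ}
    (hpath : Relation.ReflTransGen (fun a b => a ∈ Sk ∧ b ∈ Sk ∧ Adj a b) c d)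
    (hd : d ∈ Sk) :
    ∀ t : ℤ, ((content c ≤ t ∧ t ≤ content d) ∨ (content d ≤ t ∧ t ≤ content c)) →
      ∃ x ∈ Sk, content x = t := by
  induction hpath using Relation.ReflTransGen.head_induction_on with
  | refl =>
    intro t ht
    exact ⟨d, hd, by omega⟩
  | head hab _ ih =>
    rename_i a b _
    intro t ht
    by_cases hta : t = content a
    · exact ⟨a, hab.1, hta.symm⟩
    · apply ih
      rcases adj_content hab.2.2 with hc | hc <;> omega

lemma Dset_step {ν ν' : YoungDiagram} (h : ν ≤ ν')
    (hrh : IsRimHook (ν'.cells \ ν.cells)) :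
    (Dset ν ν').ncard ≤ 2 := by
  obtain ⟨hne, hconn, hdist⟩ := hrh
  set Sk := ν'.cells \ ν.cells with hSk
  set Cts := Sk.image content with hCts
  have hCne : Cts.Nonempty := hne.image content
  set m := Cts.min' hCne with hm
  set M := Cts.max' hCne with hM
  obtain ⟨xm, hxm, hxmc⟩ := Finset.mem_image.mp (Cts.min'_mem hCne)
  obtain ⟨xM, hxM, hxMc⟩ := Finset.mem_image.mp (Cts.max'_mem hCne)
  set A : ℤ → ℤ := fun k => (cnt ν' (k+1) : ℤ) - cnt ν (k+1) with hA
  have hAcard : ∀ k, A k = ((Sk.filter (fun c => content c = k)).card : ℤ) := by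
    intro k
    rw [hSk, skew_count k]
    have := cnt_mono h (k+1)
    push_cast [Nat.cast_sub this]
    rfl
  have hA01 : ∀ k, A k = if m ≤ k ∧ k ≤ M then 1 else 0 := by
    intro k
    rw [hAcard k]
    by_cases hk : m ≤ k ∧ k ≤ M
    · rw [if_pos hk]
      have hx : ∃ x ∈ Sk, content x = k := by
        apply path_content (hconn xm hxm xM hxM) hxM
        left; constructor <;> omega
      obtain ⟨x, hx1, hx2⟩ := hx
      have hcard : (Sk.filter (fun c => content c = k)).card = 1 := by
        apply le_antisymm
        · apply Finset.card_le_one.mpr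
          intro a ha b hb
          simp only [Finset.mem_filter] at ha hb
          exact hdist a ha.1 b hb.1 (by rw [ha.2, hb.2])
        · apply Finset.card_pos.mpr
          exact ⟨x, Finset.mem_filter.mpr ⟨hx1, hx2⟩⟩
      rw [hcard]; norm_num
    · rw [if_neg hk]
      have : (Sk.filter (fun c => content c = k)) = ∅ := by
        apply Finset.filter_eq_empty_iff.mpr
        intro x hx hc
        have : k ∈ Cts := Finset.mem_image.mpr ⟨x, hx, hc⟩
        have h1 := Cts.min'_le k this
        have h2 := Cts.le_max' k this
        rw [← hm] at h1; rw [← hM] at h2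
        exact hk ⟨h1, h2⟩
      rw [this]; norm_num
  have hsub : Dset ν ν' ⊆ {m, M + 1} := by
    intro j hj
    have hne' : eZ ν j ≠ eZ ν' j := hj
    have hdiff : A (j - 1) ≠ A j := by
      intro hc
      apply hne'
      have e1 : j - 1 + 1 = j := by ring
      rw [hA] at hc
      simp only [e1] at hc
      unfold eZ
      omega
    rw [hA01 (j-1), hA01 j] at hdiff
    simp only [Set.mem_insert_iff, Set.mem_singleton_iff]
    by_cases h1 : m ≤ j - 1 ∧ j - 1 ≤ M <;> by_cases h2 : m ≤ j ∧ j ≤ M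
    · rw [if_pos h1, if_pos h2] at hdiff; omega
    · rw [if_pos h1, if_neg h2] at hdiff; omega
    · rw [if_neg h1, if_pos h2] at hdiff; omega
    · rw [if_neg h1, if_neg h2] at hdiff; omega
  calc (Dset ν ν').ncard ≤ ({m, M+1} : Set ℤ).ncard :=
        Set.ncard_le_ncard hsub ((Set.finite_singleton _).insert m)
    _ ≤ 2 := by
        have := Set.ncard_insert_le m ({M+1} : Set ℤ)
        simpa using this

lemma chain_bound {r : ℕ} {ν : ℕ → YoungDiagram}
    (hst : ∀ k < r, ν k ≤ ν (k + 1) ∧ IsRimHook ((ν (k + 1)).cells \ (ν k).cells)) :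
    (Dset (ν 0) (ν r)).ncard ≤ 2 * r := by
  induction r with
  | zero =>
    have : Dset (ν 0) (ν 0) = ∅ := by
      ext j; simp [Dset]
    simp [this]
  | succ n ih =>
    have hsub : Dset (ν 0) (ν (n+1)) ⊆ Dset (ν 0) (ν n) ∪ Dset (ν n) (ν (n+1)) := by
      intro j hj
      by_cases h1 : j ∈ Dset (ν 0) (ν n)
      · exact Or.inl h1
      · right
        have he : eZ (ν 0) j = eZ (ν n) j := by
          by_contra hc; exact h1 hc
        intro hc
        exact hj (he.trans hc)
    calc (Dset (ν 0) (ν (n+1))).ncard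
        ≤ (Dset (ν 0) (ν n) ∪ Dset (ν n) (ν (n+1))).ncard := by
          exact Set.ncard_le_ncard hsub ((Dset_finite _ _).union (Dset_finite _ _))
      _ ≤ (Dset (ν 0) (ν n)).ncard + (Dset (ν n) (ν (n+1))).ncard :=
          Set.ncard_union_le _ _
      _ ≤ 2 * n + 2 := by
          have h1 := ih (fun k hk => hst k (by omega))
          have h2 := Dset_step (hst n (by omega)).1 (hst n (by omega)).2
          omega
      _ = 2 * (n+1) := by ring



def gfun (ν : YoungDiagram) (m q : ℤ) : ℤ → ℕ :=
  fun K => cnt ν K + (if m < K ∧ K ≤ q then 1 else 0)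

section Move

variable {ν : YoungDiagram} {m q : ℤ}
variable (hem : eZ ν m = 1) (heq : eZ ν q = 0) (hmq : m < q)

lemma cnt_le_gfun (K : ℤ) : cnt ν K ≤ gfun ν m q K := by
  unfold gfun; split <;> omega

lemma gfun_le_cnt_add (K : ℤ) : gfun ν m q K ≤ cnt ν K + 1 := by
  unfold gfun; split <;> omega

include hem hmq in
lemma gfun_anti_step (K : ℤ) : gfun ν m q (K + 1) ≤ gfun ν m q K := by
  have hstep := cnt_anti ν (show K ≤ K + 1 by omega)
  unfold gfun
  by_cases h1 : m < K ∧ K ≤ q <;> by_cases h2 : m < K + 1 ∧ K + 1 ≤ q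
  · rw [if_pos h1, if_pos h2]; omega
  · rw [if_pos h1, if_neg h2]; omega
  · rw [if_neg h1, if_pos h2]
    have hKm : K = m := by omega
    subst hKm
    unfold eZ at hem
    omega
  · rw [if_neg h1, if_neg h2]; omega

include heq hmq in
lemma gfun_step_le' (K : ℤ) : gfun ν m q K ≤ gfun ν m q (K + 1) + 1 := by
  have hstep := cnt_step_le ν K
  unfold gfun
  by_cases h1 : m < K ∧ K ≤ q <;> by_cases h2 : m < K + 1 ∧ K + 1 ≤ q
  · rw [if_pos h1, if_pos h2]; omega
  · rw [if_pos h1, if_neg h2]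
    have hKq : K = q := by omega
    subst hKq
    unfold eZ at heq
    omega
  · rw [if_neg h1, if_pos h2]; omega
  · rw [if_neg h1, if_neg h2]; omega

include hem hmq in
lemma gfun_anti {K K' : ℤ} (h : K ≤ K') : gfun ν m q K' ≤ gfun ν m q K := by
  have key : ∀ d : ℕ, gfun ν m q (K + d) ≤ gfun ν m q K := by
    intro d
    induction d with
    | zero => simp
    | succ n ih =>
      have := gfun_anti_step hem hmq (K + n)
      have he : K + (↑(n+1) : ℤ) = (K + n) + 1 := by push_cast; ring
      rw [he]
      omega
  have hd : K' = K + ((K' - K).toNat : ℤ) := by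
    have := Int.toNat_of_nonneg (show 0 ≤ K' - K by omega)
    omega
  rw [hd]
  exact key _

include heq hmq in
lemma gfun_le_add (K : ℤ) (d : ℕ) : gfun ν m q K ≤ gfun ν m q (K + d) + d := by
  induction d with
  | zero => simp
  | succ n ih =>
    have := gfun_step_le' heq hmq (K + n)
    have he : K + (↑(n+1) : ℤ) = (K + n) + 1 := by push_cast; ring
    rw [he]
    push_cast
    omega

lemma gfun_pos {K : ℤ} (h : K ≤ 0) : (-K).toNat < gfun ν m q K := by
  have h1 := cnt_pos_of ν h
  have h2 : cnt ν K ≤ gfun ν m q K := cnt_le_gfun K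
  omega

/-- The cell added on the diagonal of content `k`. -/
def cellFun (ν : YoungDiagram) (k : ℤ) : ℕ × ℕ :=
  (cnt ν (k+1), ((cnt ν (k+1) : ℤ) + k).toNat)

noncomputable def moveCells (ν : YoungDiagram) (m q : ℤ) : Finset (ℕ × ℕ) :=
  ν.cells ∪ (Finset.Icc m (q-1)).image (cellFun ν)

lemma cellFun_snd (ν : YoungDiagram) (k : ℤ) :
    ((cellFun ν k).2 : ℤ) = (cnt ν (k+1) : ℤ) + k := by
  have := neg_lt_cnt_succ ν k
  exact Int.toNat_of_nonneg (by omega)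

lemma mem_moveCells_iff {i j : ℕ} :
    (i, j) ∈ moveCells ν m q ↔ i < gfun ν m q ((j:ℤ) - i + 1) := by
  unfold moveCells
  rw [Finset.mem_union, Finset.mem_image]
  constructor
  · rintro (hc | ⟨k, hk, hcell⟩)
    · have := mem_iff_lt_cnt.mp (by exact hc)
      have := cnt_le_gfun (ν := ν) (m := m) (q := q) ((j:ℤ) - i + 1)
      omega
    · rw [Finset.mem_Icc] at hk
      have hfst : cnt ν (k+1) = i := congrArg Prod.fst hcell
      have hsnd : ((cellFun ν k).2 : ℤ) = (j : ℤ) := by rw [hcell]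
      rw [cellFun_snd] at hsnd
      have hK : (j:ℤ) - i + 1 = k + 1 := by omega
      rw [hK]
      unfold gfun
      rw [if_pos (by omega)]
      omega
  · intro hg
    by_cases hc : i < cnt ν ((j:ℤ) - i + 1)
    · exact Or.inl (by exact mem_iff_lt_cnt.mpr hc)
    · right
      by_cases hK : m < (j:ℤ) - i + 1 ∧ (j:ℤ) - i + 1 ≤ q
      · refine ⟨(j:ℤ) - i, Finset.mem_Icc.mpr (by omega), ?_⟩
        have hKe : (j:ℤ) - i + 1 = ((j:ℤ) - i) + 1 := rfl
        have hieq : cnt ν (((j:ℤ) - i) + 1) = i := by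
          unfold gfun at hg
          rw [if_pos hK] at hg
          omega
        unfold cellFun
        rw [hieq]
        have : ((i:ℤ) + ((j:ℤ) - i)).toNat = j := by omega
        rw [this]
      · unfold gfun at hg
        rw [if_neg hK] at hg
        omega

end Move


section Move2
variable {ν : YoungDiagram} {m q : ℤ}
variable (hem : eZ ν m = 1) (heq : eZ ν q = 0) (hmq : m < q)

include hem heq hmq in
lemma moveCells_lower : IsLowerSet ((moveCells ν m q : Finset (ℕ × ℕ)) : Set (ℕ × ℕ)) := by
  rintro ⟨i, j⟩ ⟨i', j'⟩ hle hmem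
  obtain ⟨hi, hj⟩ := Prod.mk_le_mk.mp hle
  simp only [Finset.mem_coe] at hmem ⊢
  rw [mem_moveCells_iff] at hmem ⊢
  have h1 : gfun ν m q ((j:ℤ) - i' + 1) ≤ gfun ν m q ((j':ℤ) - i' + 1) := by
    apply gfun_anti hem hmq
    have : (j':ℤ) ≤ j := by exact_mod_cast hj
    omega
  have hb := gfun_le_add heq hmq (ν := ν) ((j:ℤ) - i + 1) (i - i')
  have hcast : ((i - i' : ℕ) : ℤ) = (i:ℤ) - i' := by
    push_cast [Nat.cast_sub hi]
    ring
  rw [hcast] at hb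
  have harg : (j:ℤ) - i + 1 + ((i:ℤ) - i') = (j:ℤ) - i' + 1 := by ring
  rw [harg] at hb
  omega

/-- The Young diagram obtained from `ν` by the bead move `m → q`. -/
noncomputable def move (ν : YoungDiagram) (m q : ℤ)
    (hem : eZ ν m = 1) (heq : eZ ν q = 0) (hmq : m < q) : YoungDiagram :=
  ⟨moveCells ν m q, moveCells_lower hem heq hmq⟩

lemma mem_move_iff {i j : ℕ} :
    (i, j) ∈ move ν m q hem heq hmq ↔ i < gfun ν m q ((j:ℤ) - i + 1) :=
  mem_moveCells_iff

lemma cnt_move (K : ℤ) : cnt (move ν m q hem heq hmq) K = gfun ν m q K := by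
  set ν' := move ν m q hem heq hmq with hν'
  have key : ∀ i : ℕ, K ≤ beta ν' i ↔ i < gfun ν m q K := by
    intro i
    rcases le_or_gt (K + i) 0 with hKi | hKi
    · constructor
      · intro _
        have hg := gfun_pos (ν := ν) (m := m) (q := q) (show K ≤ 0 by omega)
        have : ((-K).toNat : ℤ) = -K := Int.toNat_of_nonneg (by omega)
        omega
      · intro _
        have : (0:ℤ) ≤ (ν'.rowLen i : ℤ) := by positivity
        unfold beta
        omega
    · set t : ℕ := (K + i - 1).toNat with ht
      have htz : (t:ℤ) = K + i - 1 := Int.toNat_of_nonneg (by omega)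
      have hmem : ((i, t) ∈ ν') ↔ i < gfun ν m q K := by
        rw [hν', mem_move_iff]
        have : (t:ℤ) - i + 1 = K := by omega
        rw [this]
      rw [← hmem, mem_iff_lt_rowLen]
      unfold beta
      constructor
      · intro hK
        have : (t:ℤ) < ν'.rowLen i := by omega
        exact_mod_cast this
      · intro hK
        have : (t:ℤ) < ν'.rowLen i := by exact_mod_cast hK
        omega
  apply cnt_eq_of_iff
  intro i
  rw [lt_cnt_iff]
  exact key i

lemma le_move : ν ≤ move ν m q hem heq hmq := by
  rw [← cells_subset_iff]
  exact Finset.subset_union_left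

lemma mem_move_skew {i j : ℕ} :
    (i, j) ∈ (move ν m q hem heq hmq).cells \ ν.cells ↔
      (m ≤ (j:ℤ) - i ∧ (j:ℤ) - i ≤ q - 1 ∧ (i:ℤ) = cnt ν ((j:ℤ) - i + 1)) := by
  rw [Finset.mem_sdiff]
  constructor
  · rintro ⟨h1, h2⟩
    rw [YoungDiagram.mem_cells, mem_move_iff] at h1
    have h2' : ¬ i < cnt ν ((j:ℤ) - i + 1) := by
      rw [YoungDiagram.mem_cells, mem_iff_lt_cnt] at h2
      exact h2
    by_cases hK : m < (j:ℤ) - i + 1 ∧ (j:ℤ) - i + 1 ≤ q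
    · unfold gfun at h1
      rw [if_pos hK] at h1
      refine ⟨by omega, by omega, by omega⟩
    · unfold gfun at h1
      rw [if_neg hK] at h1
      omega
  · rintro ⟨h1, h2, h3⟩
    constructor
    · rw [YoungDiagram.mem_cells, mem_move_iff]
      unfold gfun
      rw [if_pos (by omega)]
      omega
    · rw [YoungDiagram.mem_cells, mem_iff_lt_cnt]
      omega

lemma cellFun_mem_skew {k : ℤ} (hk1 : m ≤ k) (hk2 : k ≤ q - 1) :
    cellFun ν k ∈ (move ν m q hem heq hmq).cells \ ν.cells := by
  have hsnd := cellFun_snd ν k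
  show (cnt ν (k+1), ((cnt ν (k+1):ℤ)+k).toNat) ∈ _
  rw [mem_move_skew]
  set i : ℕ := cnt ν (k+1) with hi
  set j : ℕ := ((i:ℤ)+k).toNat with hj
  have hjz : (j:ℤ) = (i:ℤ) + k := hsnd
  have harg : (j:ℤ) - i + 1 = k + 1 := by omega
  refine ⟨by omega, by omega, ?_⟩
  rw [harg]

lemma skew_eq_cellFun {c : ℕ × ℕ}
    (hc : c ∈ (move ν m q hem heq hmq).cells \ ν.cells) :
    c = cellFun ν (content c) ∧ m ≤ content c ∧ content c ≤ q - 1 := by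
  obtain ⟨i, j⟩ := c
  rw [mem_move_skew] at hc
  obtain ⟨h1, h2, h3⟩ := hc
  have hcon : content (i, j) = (j:ℤ) - i := rfl
  rw [hcon]
  refine ⟨?_, h1, h2⟩
  unfold cellFun
  have hfst : i = cnt ν ((j:ℤ) - i + 1) := by exact_mod_cast h3
  have hsnd := cellFun_snd ν ((j:ℤ) - i)
  have : ((cnt ν ((j:ℤ) - i + 1) : ℤ) + ((j:ℤ) - i)).toNat = j := by omega
  rw [← hfst] at this ⊢
  exact Prod.ext rfl this.symm

lemma adj_symm {a b : ℕ × ℕ} (h : Adj a b) : Adj b a := by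
  unfold Adj at h ⊢
  tauto

lemma cellFun_adj {k : ℤ} (hk1 : m ≤ k) (hk2 : k ≤ q - 2) :
    Adj (cellFun ν k) (cellFun ν (k+1)) := by
  have h1 := cnt_anti ν (show k + 1 ≤ k + 1 + 1 by omega)
  have h2 := cnt_step_le ν (k+1)
  have hs1 := cellFun_snd ν k
  have hs2 := cellFun_snd ν (k+1)
  unfold Adj
  rcases Nat.lt_or_ge (cnt ν (k+1+1)) (cnt ν (k+1)) with hlt | hge
  · -- next diagonal has strictly smaller count: same column, row above
    right
    constructor
    · -- columns equal
      have : ((cellFun ν (k+1)).2 : ℤ) = ((cellFun ν k).2 : ℤ) := by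
        rw [hs1, hs2]; push_cast; omega
      exact_mod_cast this.symm
    · right
      show (cellFun ν (k+1)).1 + 1 = (cellFun ν k).1
      unfold cellFun
      omega
  · -- equal counts: same row, next column
    left
    have heqr : cnt ν (k+1+1) = cnt ν (k+1) := by omega
    constructor
    · show (cellFun ν k).1 = (cellFun ν (k+1)).1
      unfold cellFun
      omega
    · left
      have : ((cellFun ν k).2 : ℤ) + 1 = ((cellFun ν (k+1)).2 : ℤ) := by
        rw [hs1, hs2]; push_cast; omega
      exact_mod_cast this

lemma move_rimhook :
    IsRimHook ((move ν m q hem heq hmq).cells \ ν.cells) := by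
  set Sk := (move ν m q hem heq hmq).cells \ ν.cells with hSk
  set R := fun a b => a ∈ Sk ∧ b ∈ Sk ∧ Adj a b with hR
  have hRsymm : Symmetric R := by
    rintro a b ⟨h1, h2, h3⟩
    exact ⟨h2, h1, adj_symm h3⟩
  have hmem : ∀ k, m ≤ k → k ≤ q - 1 → cellFun ν k ∈ Sk := fun k h1 h2 =>
    cellFun_mem_skew hem heq hmq h1 h2
  have hchain : ∀ k, m ≤ k → ∀ k', k ≤ k' → k' ≤ q - 1 →
      Relation.ReflTransGen R (cellFun ν k) (cellFun ν k') := by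
    intro k hk1 k' hkk'
    refine Int.le_induction (motive := fun t _ => t ≤ q - 1 →
        Relation.ReflTransGen R (cellFun ν k) (cellFun ν t))
      (fun _ => Relation.ReflTransGen.refl) ?_ k' hkk'
    intro n hn ih hn2
    have hadj : Adj (cellFun ν n) (cellFun ν (n+1)) :=
      cellFun_adj (m := m) (q := q) (by omega) (by omega)
    exact Relation.ReflTransGen.tail (ih (by omega))
      ⟨hmem n (by omega) (by omega), hmem (n+1) (by omega) hn2, hadj⟩
  refine ⟨⟨cellFun ν m, hmem m le_rfl (by omega)⟩, ?_, ?_⟩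
  · intro c hc d hd
    obtain ⟨hceq, hc1, hc2⟩ := skew_eq_cellFun hem heq hmq hc
    obtain ⟨hdeq, hd1, hd2⟩ := skew_eq_cellFun hem heq hmq hd
    rw [hceq, hdeq]
    rcases le_or_gt (content c) (content d) with hle | hlt
    · exact hchain _ hc1 _ hle hd2
    · exact (haveI : Std.Symm R := ⟨fun a b h => hRsymm h⟩; Std.Symm.symm (r := Relation.ReflTransGen R) _ _)
        (hchain _ hd1 _ hlt.le hc2)
  · intro c hc d hd hcd
    obtain ⟨hceq, _, _⟩ := skew_eq_cellFun hem heq hmq hc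
    obtain ⟨hdeq, _, _⟩ := skew_eq_cellFun hem heq hmq hd
    rw [hceq, hdeq, hcd]

end Move2


lemma cnt_eZ (ν : YoungDiagram) (K : ℤ) : (cnt ν K : ℤ) = cnt ν (K+1) + eZ ν K := by
  unfold eZ; ring

lemma cnt_eq_of_eZ_eq_above {ν₁ ν₂ : YoungDiagram} {K0 : ℤ}
    (h : ∀ j, K0 ≤ j → eZ ν₁ j = eZ ν₂ j) :
    ∀ K, K0 ≤ K → cnt ν₁ K = cnt ν₂ K := by
  set hi : ℤ := max (ν₁.rowLen 0) (ν₂.rowLen 0) with hhi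
  have hz : ∀ K, hi < K → cnt ν₁ K = cnt ν₂ K := by
    intro K hK
    have h1 : (ν₁.rowLen 0 : ℤ) ≤ hi := le_max_left _ _
    have h2 : (ν₂.rowLen 0 : ℤ) ≤ hi := le_max_right _ _
    rw [cnt_eq_zero ν₁ (by omega), cnt_eq_zero ν₂ (by omega)]
  have key : ∀ d : ℕ, ∀ K, K0 ≤ K → hi < K + d → cnt ν₁ K = cnt ν₂ K := by
    intro d
    induction d with
    | zero =>
      intro K _ hK
      exact hz K (by simpa using hK)
    | succ n ihn =>
      intro K hK0 hKd
      rcases lt_or_ge hi K with hc | hc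
      · exact hz K hc
      · have hnext : cnt ν₁ (K+1) = cnt ν₂ (K+1) := by
          apply ihn (K+1) (by omega)
          push_cast at hKd ⊢
          omega
        have e1 := cnt_eZ ν₁ K
        have e2 := cnt_eZ ν₂ K
        have := h K hK0
        omega
  intro K hK
  apply key (hi + 1 - K).toNat K hK
  have := Int.self_le_toNat (hi + 1 - K)
  omega

lemma eq_of_eZ_eq {ν₁ ν₂ : YoungDiagram} (h : ∀ j, eZ ν₁ j = eZ ν₂ j) : ν₁ = ν₂ := by
  have hcnt : ∀ K, cnt ν₁ K = cnt ν₂ K := fun K =>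
    cnt_eq_of_eZ_eq_above (K0 := K) (fun j _ => h j) K le_rfl
  apply YoungDiagram.ext
  ext ⟨i, j⟩
  rw [YoungDiagram.mem_cells, YoungDiagram.mem_cells, mem_iff_lt_cnt, mem_iff_lt_cnt, hcnt]

set_option maxHeartbeats 1600000 in
lemma exists_chain (lam : YoungDiagram) : ∀ n : ℕ, ∀ ν : YoungDiagram,
    (∀ K, cnt ν K ≤ cnt lam K) → (Dset ν lam).ncard = n →
    ∃ r : ℕ, 2 * r = n ∧ ∃ f : ℕ → YoungDiagram, f 0 = ν ∧ f r = lam ∧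
      ∀ k < r, f k ≤ f (k + 1) ∧ IsRimHook ((f (k + 1)).cells \ (f k).cells) := by
  intro n
  induction n using Nat.strong_induction_on with
  | _ n IH =>
    intro ν hinv hn
    by_cases hD : Dset ν lam = ∅
    · have heq : ν = lam := by
        apply eq_of_eZ_eq
        intro j
        by_contra hc
        have : j ∈ Dset ν lam := hc
        rw [hD] at this
        exact this
      refine ⟨0, ?_, fun _ => lam, by rw [heq], rfl, by omega⟩
      rw [← hn, hD]
      simp
    · -- nonempty case
      have hFin := Dset_finite ν lam
      set T : Finset ℤ := hFin.toFinset with hT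
      have hTne : T.Nonempty := by
        rw [hT, Set.Finite.toFinset_nonempty]
        exact Set.nonempty_iff_ne_empty.mpr hD
      set q : ℤ := T.max' hTne with hq
      have hmemT : ∀ j, j ∈ T ↔ eZ ν j ≠ eZ lam j := by
        intro j
        rw [hT, Set.Finite.mem_toFinset]
        rfl
      have hq_top : ∀ j, q < j → eZ ν j = eZ lam j := by
        intro j hj
        by_contra hc
        have := T.le_max' j ((hmemT j).mpr hc)
        omega
      have hcnt_above : ∀ K, q + 1 ≤ K → cnt ν K = cnt lam K :=
        cnt_eq_of_eZ_eq_above (fun j hj => hq_top j (by omega))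
      have heZq_ne : eZ ν q ≠ eZ lam q := (hmemT q).mp (T.max'_mem hTne)
      have hc1 : cnt ν (q+1) = cnt lam (q+1) := hcnt_above (q+1) le_rfl
      have heν := cnt_eZ ν q
      have heLam := cnt_eZ lam q
      have hb1 := eZ_nonneg ν q
      have hb2 := eZ_le_one ν q
      have hb3 := eZ_nonneg lam q
      have hb4 := eZ_le_one lam q
      have hIq := hinv q
      have heZq : eZ ν q = 0 := by omega
      have heZlamq : eZ lam q = 1 := by omega
      -- find m
      set Tm : Finset ℤ := T.filter (fun j => eZ ν j = 1 ∧ eZ lam j = 0) with hTm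
      have hTm_ne : Tm.Nonempty := by
        by_contra hno
        rw [Finset.not_nonempty_iff_eq_empty] at hno
        have hle : ∀ j, eZ ν j ≤ eZ lam j := by
          intro j
          by_cases hj : eZ ν j = eZ lam j
          · omega
          · have hjT : j ∈ T := (hmemT j).mpr hj
            have hnotm : ¬ (eZ ν j = 1 ∧ eZ lam j = 0) := by
              intro hc
              have : j ∈ Tm := Finset.mem_filter.mpr ⟨hjT, hc⟩
              rw [hno] at this
              exact absurd this (Finset.notMem_empty j)
            have := eZ_nonneg ν j
            have := eZ_le_one ν j
            have := eZ_nonneg lam j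
            have := eZ_le_one lam j
            omega
        have claim : ∀ d : ℕ, (cnt ν (q - d) : ℤ) + 1 ≤ cnt lam (q - d) := by
          intro d
          induction d with
          | zero => simp only [Nat.cast_zero, sub_zero]; omega
          | succ c ihc =>
            have harg : q - ((c:ℤ)+1) + 1 = q - c := by ring
            have e1 := cnt_eZ ν (q - ((c:ℤ)+1))
            have e2 := cnt_eZ lam (q - ((c:ℤ)+1))
            rw [harg] at e1 e2
            have := hle (q - ((c:ℤ)+1))
            push_cast
            omega
        set d : ℕ := (q + max (ν.colLen 0) (lam.colLen 0)).toNat with hd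
        have hdz := Int.self_le_toNat (q + max (ν.colLen 0) (lam.colLen 0))
        have hca : (ν.colLen 0 : ℤ) ≤ (max (ν.colLen 0) (lam.colLen 0) : ℕ) := by
          exact_mod_cast le_max_left _ _
        have hcb : (lam.colLen 0 : ℤ) ≤ (max (ν.colLen 0) (lam.colLen 0) : ℕ) := by
          exact_mod_cast le_max_right _ _
        have hl1 := cnt_low ν (K := q - d) (by omega)
        have hl2 := cnt_low lam (K := q - d) (by omega)
        have := claim d
        omega
      set m : ℤ := Tm.max' hTm_ne with hm
      have hmTm : m ∈ Tm := Tm.max'_mem hTm_ne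
      have hmprop : eZ ν m = 1 ∧ eZ lam m = 0 := (Finset.mem_filter.mp hmTm).2
      have hmT : m ∈ T := (Finset.mem_filter.mp hmTm).1
      have hmq : m < q := by
        have h1 : m ≤ q := T.le_max' m hmT
        have h2 : m ≠ q := by
          intro hc
          rw [hc] at hmprop
          omega
        omega
      have hm_max : ∀ j, m < j → ¬ (eZ ν j = 1 ∧ eZ lam j = 0) := by
        intro j hj hc
        have hjT : j ∈ T := (hmemT j).mpr (by omega)
        have : j ∈ Tm := Finset.mem_filter.mpr ⟨hjT, hc⟩
        have := Tm.le_max' j this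
        omega
      have hle_above : ∀ j, m < j → eZ ν j ≤ eZ lam j := by
        intro j hj
        have := hm_max j hj
        have := eZ_nonneg ν j
        have := eZ_le_one ν j
        have := eZ_nonneg lam j
        have := eZ_le_one lam j
        omega
      -- the move
      set ν' : YoungDiagram := move ν m q hmprop.1 heZq hmq with hν'
      have hcntν' : ∀ K, cnt ν' K = gfun ν m q K := fun K => cnt_move _ _ _ K
      -- invariant for ν'
      have hstrict : ∀ d : ℕ, m < q - d → (cnt ν (q - d) : ℤ) < cnt lam (q - d) := by
        intro d
        induction d with
        | zero =>
          intro _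
          simp only [Nat.cast_zero, sub_zero]
          omega
        | succ c ihc =>
          intro hlt
          have harg : q - ((c:ℤ)+1) + 1 = q - c := by ring
          have e1 := cnt_eZ ν (q - ((c:ℤ)+1))
          have e2 := cnt_eZ lam (q - ((c:ℤ)+1))
          rw [harg] at e1 e2
          have hi1 : m < q - (c:ℤ) := by push_cast at hlt; omega
          have := ihc hi1
          have := hle_above (q - ((c:ℤ)+1)) (by push_cast at hlt ⊢; omega)
          push_cast
          omega
      have hinv' : ∀ K, cnt ν' K ≤ cnt lam K := by
        intro K
        rw [hcntν' K]
        unfold gfun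
        by_cases hK : m < K ∧ K ≤ q
        · rw [if_pos hK]
          have hd : q - ((q - K).toNat : ℤ) = K := by
            have := Int.toNat_of_nonneg (show (0:ℤ) ≤ q - K by omega)
            omega
          have := hstrict (q - K).toNat (by rw [hd]; exact hK.1)
          rw [hd] at this
          omega
        · rw [if_neg hK]
          have := hinv K
          omega
      -- eZ of ν'
      have heZν' : ∀ j, eZ ν' j =
          eZ ν j + (if m < j ∧ j ≤ q then 1 else 0) - (if m < j + 1 ∧ j + 1 ≤ q then 1 else 0) := by
        intro j
        unfold eZ
        rw [hcntν' j, hcntν' (j+1)]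
        unfold gfun
        push_cast
        ring
      have heZ'm : eZ ν' m = eZ lam m := by
        rw [heZν' m, if_neg (by omega), if_pos (by omega)]
        omega
      have heZ'q : eZ ν' q = eZ lam q := by
        rw [heZν' q, if_pos (by omega), if_neg (by omega)]
        omega
      have heZ'other : ∀ j, j ≠ m → j ≠ q → eZ ν' j = eZ ν j := by
        intro j h1 h2
        rw [heZν' j]
        by_cases hK : m < j ∧ j ≤ q
        · rw [if_pos hK, if_pos (by omega)]; ring
        · rw [if_neg hK, if_neg (by omega)]; ring
      have hDset' : Dset ν' lam = Dset ν lam \ {m, q} := by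
        ext j
        simp only [Set.mem_diff, Set.mem_insert_iff, Set.mem_singleton_iff]
        constructor
        · intro hj
          by_cases h1 : j = m
          · subst h1
            exact absurd heZ'm hj
          · by_cases h2 : j = q
            · subst h2
              exact absurd heZ'q hj
            · refine ⟨?_, by tauto⟩
              intro hc
              exact hj ((heZ'other j h1 h2).trans hc)
        · rintro ⟨hj, hne⟩
          have h1 : j ≠ m := fun hc => hne (Or.inl hc)
          have h2 : j ≠ q := fun hc => hne (Or.inr hc)
          intro hc
          exact hj ((heZ'other j h1 h2).symm.trans hc)
      have hmD : m ∈ Dset ν lam := by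
        show eZ ν m ≠ eZ lam m
        omega
      have hqD : q ∈ Dset ν lam := heZq_ne
      have hsub2 : ({m, q} : Set ℤ) ⊆ Dset ν lam := by
        rintro j (rfl | rfl)
        · exact hmD
        · exact hqD
      have hpair : ({m, q} : Set ℤ).ncard = 2 := Set.ncard_pair (by omega)
      have hn2 : 2 ≤ n := by
        rw [← hn, ← hpair]
        exact Set.ncard_le_ncard hsub2 hFin
      have hncard' : (Dset ν' lam).ncard = n - 2 := by
        rw [hDset', Set.ncard_diff hsub2 (by
          exact (Set.finite_singleton q).insert m), hpair, hn]
      obtain ⟨r', hr', f', hf0, hfr, hfst⟩ := IH (n - 2) (by omega) ν' hinv' hncard'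
      refine ⟨r' + 1, by omega,
        (fun t => match t with | 0 => ν | (s+1) => f' s), rfl, hfr, ?_⟩
      intro k hk
      match k with
      | 0 =>
        show ν ≤ f' 0 ∧ IsRimHook ((f' 0).cells \ ν.cells)
        rw [hf0]
        exact ⟨le_move hmprop.1 heZq hmq, move_rimhook hmprop.1 heZq hmq⟩
      | (s+1) =>
        exact hfst s (by omega)


end RH

/-- **Statement.** `rk(λ/μ) = (1/2) Σ_{k∈ℤ} (a_k − a_{k+1})²` (a sum with finitely many
nonzero terms). -/
theorem rank_eq_half_sum_sq (mu lam : YoungDiagram) (h : mu ≤ lam) :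
    2 * (rimHookRank mu lam : ℤ) =
      ∑ᶠ k : ℤ, ((aCount lam mu k : ℤ) - (aCount lam mu (k + 1) : ℤ)) ^ 2 := by
  rw [RH.rhs_eq h]
  suffices hS : 2 * rimHookRank mu lam = (RH.Dset mu lam).ncard by exact_mod_cast hS
  obtain ⟨r, hr, f, hf0, hfr, hfst⟩ :=
    RH.exists_chain lam ((RH.Dset mu lam).ncard) mu (fun K => RH.cnt_mono h K) rfl
  set S : Set ℕ := {r : ℕ | ∃ ν : ℕ → YoungDiagram, ν 0 = mu ∧ ν r = lam ∧
    ∀ k < r, ν k ≤ ν (k + 1) ∧ IsRimHook ((ν (k + 1)).cells \ (ν k).cells)} with hSdef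
  have hrin : r ∈ S := ⟨f, hf0, hfr, hfst⟩
  have hlow : ∀ s ∈ S, (RH.Dset mu lam).ncard ≤ 2 * s := by
    rintro s ⟨g, hg0, hgs, hgst⟩
    have hb := RH.chain_bound hgst
    rw [hg0, hgs] at hb
    exact hb
  have h1 : sInf S ≤ r := Nat.sInf_le hrin
  have h2 := hlow _ (Nat.sInf_mem (⟨r, hrin⟩ : S.Nonempty))
  have hdef : rimHookRank mu lam = sInf S := rfl
  omega
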